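/- arXiv:1101.2587 — 3 statements merged into one kernel-verified Lean document; each statement's English description precedes it below -/
import Mathlib

section
/- Let n, m be positive integers with m < n. Let E ⊆ ℝⁿ be an m-rectifiable set (i.e., E is ℋᵐ-measurable, ℋᵐ(E) > 0, and there exist countably many C¹ embeddings fᵢ : ℝᵐ → ℝⁿ such that ℋᵐ(E \ ⋃ᵢ fᵢ(ℝᵐ)) = 0). Assume E is not essentially m-flat, i.e., there is no affine m-plane T ⊆ ℝⁿ with ℋᵐ(E \ T) = 0. Then for ℋᵐ-almost every x ∈ ℝⁿ, the radial projection π_x(E \ {x}) has positive m-dimensional Hausdorff measure, where π_x(y) = (y − x)/|y − x|. -/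
open MeasureTheory Metric Set
open scoped ENNReal

/-- The radial projection from `x`, mapping `y ≠ x` to `(y - x)/‖y - x‖ ∈ S^{n-1}`. -/
noncomputable def radialProj {n : ℕ} (x y : EuclideanSpace ℝ (Fin n)) : EuclideanSpace ℝ (Fin n) :=
  ‖y - x‖⁻¹ • (y - x)

/-- A `C¹` embedding: continuously differentiable and a homeomorphism onto its image. -/
def IsC1Embedding {m n : ℕ} (f : EuclideanSpace ℝ (Fin m) → EuclideanSpace ℝ (Fin n)) : Prop :=
  ContDiff ℝ 1 f ∧ Topology.IsEmbedding f

/-- `T` is an affine `k`-plane: a translate of a `k`-dimensional linear subspace. -/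
def IsAffinePlane {n : ℕ} (k : ℕ) (T : Set (EuclideanSpace ℝ (Fin n))) : Prop :=
  ∃ (W : Submodule ℝ (EuclideanSpace ℝ (Fin n))) (v : EuclideanSpace ℝ (Fin n)),
    Module.finrank ℝ W = k ∧ T = (fun w => v + w) '' (W : Set (EuclideanSpace ℝ (Fin n)))

/-- `E` is `m`-rectifiable: `ℋᵐ`-measurable, of positive `ℋᵐ` measure, and covered up to an
`ℋᵐ`-null set by countably many `C¹` embeddings of `ℝᵐ` into `ℝⁿ`. -/
def IsRectifiableSet (m n : ℕ) (E : Set (EuclideanSpace ℝ (Fin n))) : Prop :=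
  NullMeasurableSet E (μH[(m : ℝ)]) ∧ 0 < μH[(m : ℝ)] E ∧
  ∃ f : ℕ → (EuclideanSpace ℝ (Fin m) → EuclideanSpace ℝ (Fin n)),
    (∀ i, IsC1Embedding (f i)) ∧ μH[(m : ℝ)] (E \ ⋃ i, Set.range (f i)) = 0

/-!
Let `B` be the set of centres `x` for which `π_x(E \ {x})` is `ℋᵐ`-null. Call `y = f p` a regular
point of a parametrization `f` of `E` if `Df(p)` is injective and `E ∩ range f` has positive
measure near `y`. If `x` lies off the tangent plane `y + range Df(p)`, then `π_x ∘ f` also has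
injective derivative at `p`, hence is anti-Lipschitz near `p`, and `π_x(E)` has positive measure.
So `B` lies in the tangent `m`-plane at every regular point. Regular points cover almost all of
`E`: the non-regular ones are either critical values, which are `ℋᵐ`-null by a Sard-type covering
estimate (near a critical point the image of an `r`-ball lies within `o(r)` of an
`(m - 1)`-dimensional disc), or lie outside the support of `ℋᵐ` restricted to `E ∩ range f`.
Hence the affine span of `B` has dimension at most `m`. If it is smaller, `B` is null; if it is
exactly `m`, it equals the tangent plane at every regular point and contains almost all of `E`,
which contradicts that `E` is not essentially flat.
-/

open Module Filter Topology Function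
open scoped NNReal

theorem hausdorffMeasure_eq_zero_of_forall_closedBall_cover {X : Type*} [MetricSpace X]
    [MeasurableSpace X] [BorelSpace X] {k : ℕ} {S : Set X} (C : ℝ)
    (h : ∀ η > 0, ∃ ρ, 0 < ρ ∧ ρ ≤ η ∧ ∃ T : Finset X,
      S ⊆ ⋃ q ∈ T, closedBall q ρ ∧ (T.card : ℝ) * ρ ^ k ≤ C * η) :
    μH[k] S = 0 := by
  set η : ℕ → ℝ := fun j => 1 / (j + 1)
  have hη : Tendsto η atTop (𝓝 0) := tendsto_one_div_add_atTop_nhds_zero_nat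
  choose ρ hρ hρη T hST hT using fun j => h (η j) Nat.one_div_pos_of_nat
  have hdiam (j : ℕ) (q : T j) : ediam (closedBall (q : X) (ρ j)) ≤ ENNReal.ofReal (2 * ρ j) :=
    ediam_le_of_forall_dist_le fun y hy z hz => by
      linarith [dist_triangle_right y z q, mem_closedBall.1 hy, mem_closedBall.1 hz]
  have hsum (j : ℕ) : ∑ q : T j, ediam (closedBall (q : X) (ρ j)) ^ (k : ℝ) ≤
      ENNReal.ofReal (2 ^ k * C * η j) := by
    calc ∑ q : T j, ediam (closedBall (q : X) (ρ j)) ^ (k : ℝ)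
        ≤ ∑ _q : T j, ENNReal.ofReal ((2 * ρ j) ^ k) := by
          gcongr with q
          rw [ENNReal.rpow_natCast, ENNReal.ofReal_pow (by linarith [hρ j])]
          exact pow_le_pow_left₀ bot_le (hdiam j q) k
      _ = ENNReal.ofReal (2 ^ k * ((T j).card * ρ j ^ k)) := by
          rw [Finset.sum_const, Finset.card_univ, Fintype.card_coe, nsmul_eq_mul,
            ← ENNReal.ofReal_natCast, ← ENNReal.ofReal_mul (by positivity)]
          ring_nf
      _ ≤ ENNReal.ofReal (2 ^ k * C * η j) := ENNReal.ofReal_le_ofReal <| by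
          rw [mul_assoc]; exact mul_le_mul_of_nonneg_left (hT j) (by positivity)
  refine nonpos_iff_eq_zero.1 ?_
  calc μH[k] S
        ≤ liminf (fun j => ∑ q : T j, ediam (closedBall (q : X) (ρ j)) ^ (k : ℝ)) atTop :=
        Measure.hausdorffMeasure_le_liminf_sum _ S (fun j => ENNReal.ofReal (2 * η j))
          (by simpa using ENNReal.tendsto_ofReal (hη.const_mul 2))
          (fun j (q : T j) => closedBall (q : X) (ρ j))
          (Eventually.of_forall fun j q => (hdiam j q).trans (by gcongr; exact hρη j))
          (Eventually.of_forall fun j => by simpa [iUnion_subtype] using hST j)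
    _ ≤ liminf (fun j => ENNReal.ofReal (2 ^ k * C * η j)) atTop :=
        liminf_le_liminf (Eventually.of_forall hsum)
    _ = 0 := by simpa using (ENNReal.tendsto_ofReal (hη.const_mul (2 ^ k * C))).liminf_eq

theorem AntilipschitzWith.le_hausdorffMeasure_image_of_domRestrict {X Y : Type*}
    [EMetricSpace X] [EMetricSpace Y] [MeasurableSpace X] [BorelSpace X] [MeasurableSpace Y]
    [BorelSpace Y] {g : X → Y} {s A : Set X} {K : ℝ≥0} {d : ℝ}
    (hg : AntilipschitzWith K (s.domRestrict g)) (hA : A ⊆ s) (hd : 0 ≤ d) :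
    μH[d] A ≤ (K : ℝ≥0∞) ^ d * μH[d] (g '' A) := by
  have hA' : ((↑) : s → X) '' ((↑) ⁻¹' A) = A := by
    rw [Subtype.image_preimage_coe, inter_eq_right.2 hA]
  calc μH[d] A = μH[d] ((↑) ⁻¹' A : Set s) := by
        rw [← (isometry_subtype_coe : Isometry ((↑) : s → X)).hausdorffMeasure_image (Or.inl hd),
          hA']
    _ ≤ (K : ℝ≥0∞) ^ d * μH[d] (s.domRestrict g '' ((↑) ⁻¹' A)) :=
        hg.le_hausdorffMeasure_image hd _
    _ = (K : ℝ≥0∞) ^ d * μH[d] (g '' A) := by rw [domRestrict_eq, image_comp, hA']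

section FiniteDimensional

variable {E F : Type*} [NormedAddCommGroup E] [NormedSpace ℝ E] [FiniteDimensional ℝ E]
  [NormedAddCommGroup F] [NormedSpace ℝ F]

theorem Finset.card_mul_pow_finrank_le_of_isSeparated {x : E} {ρ δ : ℝ} (hρ : 0 ≤ ρ)
    (hδ : 0 < δ) {T : Finset E} (hT : (T : Set E) ⊆ closedBall x ρ)
    (hsep : IsSeparated (ENNReal.ofReal δ) (T : Set E)) :
    (T.card : ℝ) * δ ^ finrank ℝ E ≤ (2 * ρ + δ) ^ finrank ℝ E := by
  borelize E
  set μ : Measure E := Measure.addHaar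
  have hdisj : (T : Set E).PairwiseDisjoint fun c => ball c (δ / 2) := by
    intro c hc c' hc' hne
    have h : ENNReal.ofReal δ < edist c c' := hsep hc hc' hne
    rw [edist_dist, ENNReal.ofReal_lt_ofReal_iff_of_nonneg hδ.le] at h
    exact ball_disjoint_ball (by linarith)
  have hsub : ⋃ c ∈ T, ball c (δ / 2) ⊆ ball x (ρ + δ / 2) := by
    refine iUnion₂_subset fun c hc y hy => ?_
    have hcx : dist c x ≤ ρ := hT hc
    rw [mem_ball] at hy ⊢
    linarith [dist_triangle y c x]
  have hvol := measure_mono (μ := μ) hsub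
  rw [measure_biUnion_finset hdisj fun _ _ => measurableSet_ball,
    Finset.sum_congr rfl fun c _ => μ.addHaar_ball_of_pos c (half_pos hδ), Finset.sum_const,
    nsmul_eq_mul, μ.addHaar_ball_of_pos x (by positivity), ← mul_assoc,
    ENNReal.mul_le_mul_iff_left (measure_ball_pos μ 0 one_pos).ne' measure_ball_lt_top.ne,
    ← ENNReal.ofReal_natCast, ← ENNReal.ofReal_mul (by positivity),
    ENNReal.ofReal_le_ofReal_iff (by positivity)] at hvol
  calc (T.card : ℝ) * δ ^ finrank ℝ E
        = 2 ^ finrank ℝ E * (T.card * (δ / 2) ^ finrank ℝ E) := by rw [div_pow]; field_simp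
    _ ≤ 2 ^ finrank ℝ E * (ρ + δ / 2) ^ finrank ℝ E := by gcongr
    _ = (2 * ρ + δ) ^ finrank ℝ E := by rw [← mul_pow]; ring_nf

theorem exists_finset_closedBall_cover {k : ℕ} (hk : finrank ℝ E ≤ k) (x : E) {ρ δ : ℝ}
    (hρ : 0 ≤ ρ) (hδ : 0 < δ) :
    ∃ T : Finset E, closedBall x ρ ⊆ ⋃ c ∈ T, closedBall c δ ∧
      (T.card : ℝ) * δ ^ k ≤ (2 * ρ + δ) ^ k := by
  lift δ to ℝ≥0 using hδ.le
  have hbound {T : Finset E} (hT : (T : Set E) ⊆ closedBall x ρ)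
      (hsep : IsSeparated δ (T : Set E)) :
      (T.card : ℝ) * δ ^ finrank ℝ E ≤ (2 * ρ + δ) ^ finrank ℝ E :=
    T.card_mul_pow_finrank_le_of_isSeparated hρ hδ hT (by simpa using hsep)
  have hpack : packingNumber δ (closedBall x ρ) ≠ ⊤ := by
    obtain ⟨N, hN⟩ := exists_nat_gt ((2 * ρ + δ) ^ finrank ℝ E / (δ : ℝ) ^ finrank ℝ E)
    refine ne_top_of_le_ne_top (ENat.natCast_ne_top N)
      (iSup₂_le fun C hC => iSup_le fun hsep => ?_)
    by_contra! hlt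
    obtain ⟨D, hDC, hDcard⟩ := exists_subset_encard_eq hlt.le
    have hD : D.Finite := finite_of_encard_eq_coe hDcard
    have h := hbound (T := hD.toFinset) (by simpa using hDC.trans hC)
      (by simpa using hsep.subset hDC)
    rw [← Set.ncard_eq_toFinset_card D hD, ncard_def, hDcard, ENat.toNat_natCast] at h
    rw [div_lt_iff₀ (by positivity)] at hN
    linarith
  have hfin : (maximalSeparatedSet δ (closedBall x ρ)).Finite := by
    rw [← encard_ne_top_iff, encard_maximalSeparatedSet hpack]
    exact hpack
  refine ⟨hfin.toFinset, fun y hy => ?_, ?_⟩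
  · obtain ⟨c, hc, hyc⟩ := isCover_maximalSeparatedSet hpack hy
    exact mem_iUnion₂.2 ⟨c, by simpa using hc, by simpa [edist_dist] using hyc⟩
  · have h := hbound (T := hfin.toFinset) (by simpa using maximalSeparatedSet_subset)
      (by simpa using (isSeparated_maximalSeparatedSet : IsSeparated δ _))
    calc (hfin.toFinset.card : ℝ) * δ ^ k
        = hfin.toFinset.card * δ ^ finrank ℝ E * δ ^ (k - finrank ℝ E) := by
          rw [mul_assoc, ← pow_add, Nat.add_sub_cancel' hk]
      _ ≤ (2 * ρ + δ) ^ finrank ℝ E * (2 * ρ + δ) ^ (k - finrank ℝ E) := by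
          gcongr; linarith
      _ = (2 * ρ + δ) ^ k := by rw [← pow_add, Nat.add_sub_cancel' hk]

theorem exists_finset_cover_image_of_fderiv_near {f : E → F} {s : Set E} {p : E} {k : ℕ}
    {ρ η L : ℝ} (hs : Convex ℝ s) (hp : p ∈ s) (hsp : s ⊆ closedBall p ρ)
    (hf : ∀ z ∈ s, DifferentiableAt ℝ f z) (hη : ∀ z ∈ s, ‖fderiv ℝ f z - fderiv ℝ f p‖ ≤ η)
    (hL : ‖fderiv ℝ f p‖ ≤ L)
    (hrank : finrank ℝ (LinearMap.range (fderiv ℝ f p : E →ₗ[ℝ] F)) ≤ k) (hρ : 0 < ρ)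
    (hη₀ : 0 < η) :
    ∃ G : Finset F, f '' s ⊆ ⋃ q ∈ G, closedBall q (2 * (η * ρ)) ∧
      (G.card : ℝ) * (η * ρ) ^ k ≤ (2 * L * ρ + η * ρ) ^ k := by
  classical
  set W := LinearMap.range (fderiv ℝ f p : E →ₗ[ℝ] F)
  have hL₀ : 0 ≤ L := (norm_nonneg _).trans hL
  obtain ⟨G, hcover, hcard⟩ :=
    exists_finset_closedBall_cover hrank (0 : W) (mul_nonneg hL₀ hρ.le) (mul_pos hη₀ hρ)
  refine ⟨G.image fun w : W => f p + w, ?_, ?_⟩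
  · rintro _ ⟨u, hu, rfl⟩
    have hup : ‖u - p‖ ≤ ρ := mem_closedBall_iff_norm.1 (hsp hu)
    have htaylor : ‖f u - f p - fderiv ℝ f p (u - p)‖ ≤ η * ρ :=
      (hs.norm_image_sub_le_of_norm_fderiv_le' hf hη hp hu).trans (by gcongr)
    set w : W := ⟨fderiv ℝ f p (u - p), LinearMap.mem_range_self _ _⟩
    have hw : w ∈ closedBall (0 : W) (L * ρ) := by
      rw [mem_closedBall_zero_iff, Submodule.coe_norm]
      exact (ContinuousLinearMap.le_opNorm _ _).trans (by gcongr)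
    obtain ⟨c, hc, hwc⟩ := mem_iUnion₂.1 (hcover hw)
    refine mem_iUnion₂.2 ⟨f p + c, Finset.mem_image_of_mem _ hc, ?_⟩
    rw [mem_closedBall, dist_eq_norm]
    rw [mem_closedBall, Subtype.dist_eq, dist_eq_norm] at hwc
    calc ‖f u - (f p + c)‖ = ‖(f u - f p - w) + (w - c)‖ := by congr 1; abel
      _ ≤ η * ρ + η * ρ := norm_add_le_of_le htaylor hwc
      _ = 2 * (η * ρ) := by ring
  · calc ((G.image fun w : W => f p + w).card : ℝ) * (η * ρ) ^ k
        ≤ G.card * (η * ρ) ^ k := by gcongr; exact Finset.card_image_le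
      _ ≤ (2 * (L * ρ) + η * ρ) ^ k := hcard
      _ = (2 * L * ρ + η * ρ) ^ k := by ring

theorem ContinuousLinearMap.finrank_range_add_one_le_of_not_injective {g : E →L[ℝ] F}
    (hg : ¬ Injective g) :
    finrank ℝ (LinearMap.range (g : E →ₗ[ℝ] F)) + 1 ≤ finrank ℝ E := by
  have hker : LinearMap.ker (g : E →ₗ[ℝ] F) ≠ ⊥ := fun h => hg (LinearMap.ker_eq_bot.1 h)
  have := LinearMap.finrank_range_add_finrank_ker (g : E →ₗ[ℝ] F)
  have := Submodule.one_le_finrank_iff.2 hker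
  omega

theorem exists_finset_cover_image_inter_closedBall_of_rank_le {f : E → F}
    (hf : Differentiable ℝ f) {K S : Set E} (hK : Convex ℝ K) (hSK : S ⊆ K) {k : ℕ}
    (hrank : ∀ p ∈ S, finrank ℝ (LinearMap.range (fderiv ℝ f p : E →ₗ[ℝ] F)) ≤ k)
    {L η r : ℝ} (hL₀ : 0 ≤ L) (hL : ∀ z ∈ K, ‖fderiv ℝ f z‖ ≤ L)
    (hosc : ∀ z ∈ K, ∀ z' ∈ K, dist z z' ≤ 2 * r → dist (fderiv ℝ f z) (fderiv ℝ f z') ≤ η)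
    (hr : 0 < r) (hη : 0 < η) (hη₁ : η ≤ 1) (c : E) :
    ∃ G : Finset F, f '' (S ∩ closedBall c r) ⊆ ⋃ q ∈ G, closedBall q (2 * (η * (2 * r))) ∧
      (G.card : ℝ) * (2 * (η * (2 * r))) ^ (k + 1) ≤
        2 ^ (k + 1) * ((4 * L + 2) * r) ^ k * (η * (2 * r)) := by
  rcases (S ∩ closedBall c r).eq_empty_or_nonempty with h | ⟨p, hpS, hpc⟩
  · exact ⟨∅, by simp [h], by simp; positivity⟩
  have hsub : S ∩ closedBall c r ⊆ K ∩ closedBall p (2 * r) := fun z ⟨hzS, hzc⟩ =>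
    ⟨hSK hzS, by rw [mem_closedBall] at *; linarith [dist_triangle_right z p c]⟩
  obtain ⟨G, hG, hGcard⟩ := exists_finset_cover_image_of_fderiv_near
    (hK.inter (convex_closedBall p (2 * r))) ⟨hSK hpS, mem_closedBall_self (by positivity)⟩
    inter_subset_right (fun z _ => hf z)
    (fun z hz => dist_eq_norm (fderiv ℝ f z) _ ▸ hosc z hz.1 p (hSK hpS) hz.2)
    (hL p (hSK hpS)) (hrank p hpS) (by positivity) hη
  refine ⟨G, (image_mono hsub).trans hG, ?_⟩
  have hε₀ : 0 ≤ η * (2 * r) := by positivity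
  have hε : η * (2 * r) ≤ 2 * r := by nlinarith
  -- An opaque `ε` stops `ring` from normalizing `2 * 2` to `4` under the symbolic exponent.
  generalize η * (2 * r) = ε at hε₀ hε hGcard ⊢
  calc (G.card : ℝ) * (2 * ε) ^ (k + 1) = 2 ^ (k + 1) * (G.card * ε ^ k) * ε := by ring
    _ ≤ 2 ^ (k + 1) * (2 * L * (2 * r) + ε) ^ k * ε := by gcongr
    _ ≤ 2 ^ (k + 1) * ((4 * L + 2) * r) ^ k * ε := by gcongr; linarith

theorem ContDiff.hausdorffMeasure_image_critical_inter_closedBall [MeasurableSpace F]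
    [BorelSpace F] {f : E → F} (hf : ContDiff ℝ 1 f) (R : ℝ) :
    μH[finrank ℝ E] (f '' ({p | ¬ Injective (fderiv ℝ f p)} ∩ closedBall 0 R)) = 0 := by
  classical
  set S := {p | ¬ Injective (fderiv ℝ f p)} ∩ closedBall (0 : E) R
  rcases S.eq_empty_or_nonempty with hS | ⟨p₀, hp₀⟩
  · simp [hS]
  obtain ⟨k, hk⟩ : ∃ k, finrank ℝ E = k + 1 := Nat.exists_eq_add_one.2 (by
    have := ContinuousLinearMap.finrank_range_add_one_le_of_not_injective hp₀.1
    omega)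
  have hrank (p : E) (hp : p ∈ S) :
      finrank ℝ (LinearMap.range (fderiv ℝ f p : E →ₗ[ℝ] F)) ≤ k := by
    have := ContinuousLinearMap.finrank_range_add_one_le_of_not_injective hp.1
    omega
  have hR : 0 ≤ R := (norm_nonneg p₀).trans (by simpa using hp₀.2)
  have hK := isCompact_closedBall (0 : E) R
  have hcont : ContinuousOn (fderiv ℝ f) (closedBall 0 R) :=
    (hf.continuous_fderiv one_ne_zero).continuousOn
  obtain ⟨L, hL⟩ := hK.exists_bound_of_continuousOn hcont
  have hL₀ : 0 ≤ L := (norm_nonneg _).trans (hL p₀ hp₀.2)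
  have huc := Metric.uniformContinuousOn_iff_le.1 (hK.uniformContinuousOn_of_continuous hcont)
  rw [hk]
  refine hausdorffMeasure_eq_zero_of_forall_closedBall_cover
    (2 ^ (k + 2) * (4 * L + 2) ^ k * (2 * R + 1) ^ (k + 1)) fun η hη => ?_
  -- `η' ≤ 1` and `r ≤ 1 / 4` make the final radius at most `η`.
  set η' := min η 1
  obtain ⟨δ, hδ, hδuc⟩ := huc η' (lt_min hη one_pos)
  set r := min (δ / 2) (1 / 4)
  have hr : 0 < r := lt_min (half_pos hδ) (by norm_num)
  obtain ⟨P, hPcov, hPcard⟩ := exists_finset_closedBall_cover hk.le (0 : E) hR hr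
  choose G hG hGcard using exists_finset_cover_image_inter_closedBall_of_rank_le
    (hf.differentiable one_ne_zero) (convex_closedBall 0 R) inter_subset_right hrank hL₀ hL
    (fun z hz z' hz' hzz' =>
      hδuc z hz z' hz' (hzz'.trans (by linarith [min_le_left (δ / 2) (1 / 4)])))
    hr (lt_min hη one_pos) (min_le_right η 1)
  refine ⟨2 * (η' * (2 * r)), by positivity, ?_, P.biUnion G, ?_, ?_⟩
  · nlinarith [min_le_left η 1, min_le_right (δ / 2) (1 / 4), min_le_right η 1]
  · rintro _ ⟨p, hp, rfl⟩
    obtain ⟨c, hc, hpc⟩ := mem_iUnion₂.1 (hPcov hp.2)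
    obtain ⟨q, hq, hfq⟩ := mem_iUnion₂.1 (hG c (mem_image_of_mem f ⟨hp, hpc⟩))
    exact mem_iUnion₂.2 ⟨q, Finset.mem_biUnion.2 ⟨c, hc, hq⟩, hfq⟩
  · calc ((P.biUnion G).card : ℝ) * (2 * (η' * (2 * r))) ^ (k + 1)
        ≤ ∑ c ∈ P, (G c).card * (2 * (η' * (2 * r))) ^ (k + 1) := by
          rw [← Finset.sum_mul]; gcongr; exact_mod_cast Finset.card_biUnion_le
      _ ≤ ∑ _c ∈ P, 2 ^ (k + 1) * ((4 * L + 2) * r) ^ k * (η' * (2 * r)) :=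
          Finset.sum_le_sum fun c _ => hGcard c
      _ = 2 ^ (k + 2) * (4 * L + 2) ^ k * η' * (P.card * r ^ (k + 1)) := by
          rw [Finset.sum_const, nsmul_eq_mul, mul_pow]; ring
      _ ≤ 2 ^ (k + 2) * (4 * L + 2) ^ k * η * (2 * R + 1) ^ (k + 1) := by
          gcongr
          · exact min_le_left _ _
          · exact hPcard.trans (by gcongr; linarith [min_le_right (δ / 2) (1 / 4)])
      _ = 2 ^ (k + 2) * (4 * L + 2) ^ k * (2 * R + 1) ^ (k + 1) * η := by ring

theorem ContDiff.hausdorffMeasure_image_critical [MeasurableSpace F] [BorelSpace F] {f : E → F}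
    (hf : ContDiff ℝ 1 f) :
    μH[finrank ℝ E] (f '' {p | ¬ Injective (fderiv ℝ f p)}) = 0 := by
  rw [← inter_univ {p | _}, ← iUnion_closedBall_nat (0 : E), inter_iUnion, image_iUnion]
  exact measure_iUnion_null fun R => hf.hausdorffMeasure_image_critical_inter_closedBall R

theorem HasStrictFDerivAt.exists_antilipschitzWith_domRestrict {g : E → F} {g' : E →L[ℝ] F}
    {a : E} (hg : HasStrictFDerivAt g g' a) (hinj : Injective g') :
    ∃ s ∈ 𝓝 a, ∃ K, AntilipschitzWith K (s.domRestrict g) := by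
  obtain ⟨K, hK₀, hK⟩ := LinearMap.exists_antilipschitzWith (g' : E →ₗ[ℝ] F)
    (LinearMap.ker_eq_bot.2 hinj)
  obtain ⟨s, hs, hgs⟩ := hg.approximates_deriv_on_nhds (c := K⁻¹ / 2) (Or.inr (by positivity))
  refine ⟨s, hs, (K⁻¹ - K⁻¹ / 2)⁻¹, ?_⟩
  have h := (hK.domRestrict s).add_lipschitzWith hgs.lipschitz_sub
    (NNReal.half_lt_self (inv_pos.2 hK₀).ne')
  simp only [Set.domRestrict_apply, ContinuousLinearMap.coe_coe, add_sub_cancel] at h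
  exact h

end FiniteDimensional

section RegularPoints

variable {E F : Type*} [NormedAddCommGroup E] [NormedSpace ℝ E] [NormedAddCommGroup F]
  [NormedSpace ℝ F] [MeasurableSpace F] [BorelSpace F]

def regularPoints (d : ℝ) (S : Set F) (f : E → F) : Set F :=
  f '' {p | Injective (fderiv ℝ f p)} ∩ (μH[d].restrict (S ∩ range f)).support

theorem hausdorffMeasure_inter_range_diff_regularPoints [FiniteDimensional ℝ E]
    [HereditarilyLindelofSpace F] {f : E → F} (hf : ContDiff ℝ 1 f) (S : Set F) :
    μH[finrank ℝ E] ((S ∩ range f) \ regularPoints (finrank ℝ E) S f) = 0 := by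
  set μ := μH[(finrank ℝ E : ℝ)].restrict (S ∩ range f)
  have hsub : (S ∩ range f) \ regularPoints (finrank ℝ E) S f ⊆
      f '' {p | ¬ Injective (fderiv ℝ f p)} ∪ μ.supportᶜ ∩ (S ∩ range f) := by
    rintro y ⟨⟨hyS, p, rfl⟩, hy⟩
    by_cases hp : Injective (fderiv ℝ f p)
    · exact Or.inr ⟨fun hsupp => hy ⟨mem_image_of_mem f hp, hsupp⟩, hyS, p, rfl⟩
    · exact Or.inl (mem_image_of_mem f hp)
  refine measure_mono_null hsub (measure_union_null hf.hausdorffMeasure_image_critical ?_)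
  rw [← Measure.restrict_apply Measure.isOpen_compl_support.measurableSet]
  exact Measure.measure_compl_support

theorem hausdorffMeasure_diff_iUnion_regularPoints [FiniteDimensional ℝ E]
    [HereditarilyLindelofSpace F] {ι : Type*} [Countable ι] {f : ι → E → F}
    (hf : ∀ i, ContDiff ℝ 1 (f i)) {S : Set F}
    (hS : μH[finrank ℝ E] (S \ ⋃ i, range (f i)) = 0) :
    μH[finrank ℝ E] (S \ ⋃ i, regularPoints (finrank ℝ E) S (f i)) = 0 := by
  have hsub : S \ ⋃ i, regularPoints (finrank ℝ E) S (f i) ⊆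
      (S \ ⋃ i, range (f i)) ∪ ⋃ i, (S ∩ range (f i)) \ regularPoints (finrank ℝ E) S (f i) := by
    rintro y ⟨hyS, hy⟩
    by_cases hyf : y ∈ ⋃ i, range (f i)
    · obtain ⟨i, hi⟩ := mem_iUnion.1 hyf
      exact Or.inr (mem_iUnion.2 ⟨i, ⟨hyS, hi⟩, fun h => hy (mem_iUnion.2 ⟨i, h⟩)⟩)
    · exact Or.inl ⟨hyS, hyf⟩
  exact measure_mono_null hsub (measure_union_null hS (measure_iUnion_null fun i =>
    hausdorffMeasure_inter_range_diff_regularPoints (hf i) S))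

end RegularPoints

section RadialProjection

variable {n : ℕ} {E : Type*} [NormedAddCommGroup E] [NormedSpace ℝ E]

theorem contDiffAt_radialProj {x y : EuclideanSpace ℝ (Fin n)} (hxy : y ≠ x) :
    ContDiffAt ℝ 1 (radialProj x) y :=
  have hsub : ContDiffAt ℝ 1 (fun u : EuclideanSpace ℝ (Fin n) => u - x) y :=
    contDiffAt_id.sub contDiffAt_const
  (((contDiffAt_norm ℝ (sub_ne_zero.2 hxy)).comp y hsub).inv
    (norm_ne_zero_iff.2 (sub_ne_zero.2 hxy))).smul hsub

theorem norm_sub_smul_radialProj (x u : EuclideanSpace ℝ (Fin n)) :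
    ‖u - x‖ • radialProj x u = u - x := by
  rcases eq_or_ne u x with rfl | hu
  · simp [radialProj]
  · rw [radialProj, smul_smul, mul_inv_cancel₀ (norm_ne_zero_iff.2 (sub_ne_zero.2 hu)), one_smul]

theorem exists_eq_smul_of_fderiv_radialProj_eq_zero {x y v : EuclideanSpace ℝ (Fin n)}
    (hxy : y ≠ x) (hv : fderiv ℝ (radialProj x) y v = 0) : ∃ t : ℝ, v = t • (y - x) := by
  have hN : DifferentiableAt ℝ (fun u : EuclideanSpace ℝ (Fin n) => ‖u - x‖) y :=
    (differentiableAt_id.sub_const x).norm ℝ (sub_ne_zero.2 hxy)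
  have hπ : DifferentiableAt ℝ (radialProj x) y :=
    (contDiffAt_radialProj hxy).differentiableAt one_ne_zero
  have hder := hN.hasFDerivAt.smul hπ.hasFDerivAt
  rw [show (fun u => ‖u - x‖) • radialProj x = fun u => u - x from
    funext (norm_sub_smul_radialProj x)] at hder
  have h := congrArg (· v) (hder.unique ((hasFDerivAt_id y).sub_const x))
  simp only [add_apply, smul_apply, hv, smul_zero, ContinuousLinearMap.smulRight_apply, zero_add,
    ContinuousLinearMap.id_apply] at h
  exact ⟨_, by rw [← h, radialProj, smul_smul]⟩

theorem injective_fderiv_radialProj_comp {g : E →L[ℝ] EuclideanSpace ℝ (Fin n)}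
    (hg : Injective g) {x y : EuclideanSpace ℝ (Fin n)} (hxy : y ≠ x)
    (hx : x - y ∉ LinearMap.range (g : E →ₗ[ℝ] _)) :
    Injective ((fderiv ℝ (radialProj x) y).comp g) := by
  refine (injective_iff_map_eq_zero _).2 fun v hv => ?_
  obtain ⟨t, ht⟩ : ∃ t : ℝ, g v = t • (y - x) :=
    exists_eq_smul_of_fderiv_radialProj_eq_zero hxy hv
  rcases eq_or_ne t 0 with rfl | ht₀
  · exact hg (by rw [ht, zero_smul, map_zero])
  · refine absurd ⟨-t⁻¹ • v, ?_⟩ hx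
    simp [ht, smul_smul, ht₀]

theorem hausdorffMeasure_radialProj_image_pos [FiniteDimensional ℝ E] {d : ℝ} (hd : 0 ≤ d)
    {S : Set (EuclideanSpace ℝ (Fin n))} {f : E → EuclideanSpace ℝ (Fin n)}
    (hf : ContDiff ℝ 1 f) (hfe : IsEmbedding f) {p : E} (hinj : Injective (fderiv ℝ f p))
    (hp : f p ∈ (μH[d].restrict (S ∩ range f)).support) {x : EuclideanSpace ℝ (Fin n)}
    (hx : x - f p ∉ LinearMap.range (fderiv ℝ f p : E →ₗ[ℝ] _)) :
    0 < μH[d] (radialProj x '' (S \ {x})) := by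
  borelize E
  have hxy : f p ≠ x := fun h => hx (by simp [h])
  obtain ⟨s, hs, K, hK⟩ :=
    (((contDiffAt_radialProj hxy).hasStrictFDerivAt one_ne_zero).comp p
      (hf.contDiffAt.hasStrictFDerivAt one_ne_zero)).exists_antilipschitzWith_domRestrict
      (injective_fderiv_radialProj_comp hinj hxy hx)
  obtain ⟨L, t, ht, hL⟩ := hf.contDiffAt.exists_lipschitzOnWith
  have hU : s ∩ t ∩ f ⁻¹' ball (f p) (dist (f p) x) ∈ 𝓝 p :=
    inter_mem (inter_mem hs ht)
      (hf.continuous.continuousAt.preimage_mem_nhds (ball_mem_nhds _ (dist_pos.2 hxy)))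
  obtain ⟨V, hV, hVU⟩ := hfe.isInducing.nhds_eq_comap p ▸ hU
  obtain ⟨V', hV'V, hV'open, hpV'⟩ := _root_.mem_nhds_iff.1 hV
  set A := f ⁻¹' (S ∩ V')
  have hAU : A ⊆ s ∩ t ∩ f ⁻¹' ball (f p) (dist (f p) x) := fun a ha => hVU (hV'V ha.2)
  have hfA : 0 < μH[d] (f '' A) := by
    have h := (Measure.mem_support_iff_forall _).1 hp V' (hV'open.mem_nhds hpV')
    rwa [Measure.restrict_apply hV'open.measurableSet, ← inter_assoc, inter_comm V',
      ← image_preimage_eq_inter_range] at h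
  have hA : 0 < μH[d] A := (ENNReal.mul_pos_iff.1 (hfA.trans_le
    ((hL.mono fun a ha => (hAU ha).1.2).hausdorffMeasure_image_le hd))).2
  have hgA : 0 < μH[d] ((radialProj x ∘ f) '' A) := (ENNReal.mul_pos_iff.1 (hA.trans_le
    (hK.le_hausdorffMeasure_image_of_domRestrict (fun a ha => (hAU ha).1.1) hd))).2
  refine hgA.trans_le (measure_mono ?_)
  rintro _ ⟨a, ha, rfl⟩
  refine ⟨f a, ⟨ha.1, fun hax => ?_⟩, rfl⟩
  have hfa := (hAU ha).2
  rw [mem_preimage, hax, mem_ball, dist_comm] at hfa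
  exact lt_irrefl _ hfa

theorem exists_tangent_plane_of_mem_regularPoints [FiniteDimensional ℝ E] {d : ℝ} (hd : 0 ≤ d)
    {S : Set (EuclideanSpace ℝ (Fin n))} {f : E → EuclideanSpace ℝ (Fin n)}
    (hf : ContDiff ℝ 1 f) (hfe : IsEmbedding f) {y : EuclideanSpace ℝ (Fin n)}
    (hy : y ∈ regularPoints d S f) :
    ∃ W : Submodule ℝ (EuclideanSpace ℝ (Fin n)), finrank ℝ W = finrank ℝ E ∧
      ∀ x, μH[d] (radialProj x '' (S \ {x})) = 0 → x - y ∈ W := by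
  obtain ⟨⟨p, hp : Injective (fderiv ℝ f p), rfl⟩, hsupp⟩ := hy
  refine ⟨LinearMap.range (fderiv ℝ f p : E →ₗ[ℝ] _), LinearMap.finrank_range_of_inj hp,
    fun x hx => ?_⟩
  by_contra hxW
  exact (hausdorffMeasure_radialProj_image_pos hd hf hfe hp hsupp hxW).ne' hx

end RadialProjection

theorem AffineSubspace.coe_eq_image_add_direction {F : Type*} [AddCommGroup F] [Module ℝ F]
    {Q : AffineSubspace ℝ F} {v : F} (hv : v ∈ Q) :
    (Q : Set F) = (fun w => v + w) '' (Q.direction : Set F) := by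
  refine Set.ext fun z => ⟨fun hz => ⟨z - v, vsub_mem_direction hz hv, add_sub_cancel v z⟩, ?_⟩
  rintro ⟨w, hw, rfl⟩
  simpa [add_comm] using vadd_mem_of_mem_direction hw hv

theorem AffineSubspace.hausdorffMeasure_eq_zero {F : Type*} [NormedAddCommGroup F]
    [NormedSpace ℝ F] [MeasurableSpace F] [BorelSpace F] (Q : AffineSubspace ℝ F)
    [FiniteDimensional ℝ Q.direction] {d : ℝ} (hd : finrank ℝ Q.direction < d) :
    μH[d] (Q : Set F) = 0 := by
  rcases (Q : Set F).eq_empty_or_nonempty with hQ | ⟨v, hv⟩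
  · simp [hQ]
  have hd₀ : 0 ≤ d := (Nat.cast_nonneg _).trans hd.le
  rw [Q.coe_eq_image_add_direction hv, (isometry_add_left v).hausdorffMeasure_image (Or.inl hd₀),
    ← Subtype.range_coe (s := (Q.direction : Set F)), ← image_univ,
    (isometry_subtype_coe : Isometry ((↑) : Q.direction → F)).hausdorffMeasure_image (Or.inl hd₀),
    Real.hausdorffMeasure_of_finrank_lt hd, Measure.coe_zero, Pi.zero_apply]

theorem AffineSubspace.isAffinePlane {n k : ℕ} {Q : AffineSubspace ℝ (EuclideanSpace ℝ (Fin n))}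
    (hQ : (Q : Set (EuclideanSpace ℝ (Fin n))).Nonempty) (hk : finrank ℝ Q.direction = k) :
    IsAffinePlane k (Q : Set (EuclideanSpace ℝ (Fin n))) :=
  ⟨Q.direction, hQ.some, hk, Q.coe_eq_image_add_direction hQ.some_mem⟩

theorem hausdorffMeasure_eq_zero_or_subset_affinePlane {n m : ℕ}
    {B Y : Set (EuclideanSpace ℝ (Fin n))} (hY : Y.Nonempty)
    (hBY : ∀ y ∈ Y, ∃ W : Submodule ℝ (EuclideanSpace ℝ (Fin n)), finrank ℝ W = m ∧
      ∀ x ∈ B, x - y ∈ W) :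
    μH[m] B = 0 ∨ ∃ T, IsAffinePlane m T ∧ Y ⊆ T := by
  set Q := affineSpan ℝ B
  have hQle {y W} (hW : ∀ x ∈ B, x - y ∈ W) : Q ≤ AffineSubspace.mk' y W :=
    affineSpan_le.2 fun x hx => AffineSubspace.mem_mk'.2 (hW x hx)
  obtain ⟨y₀, hy₀⟩ := hY
  obtain ⟨W₀, hW₀, hBW₀⟩ := hBY y₀ hy₀
  have hQm : finrank ℝ Q.direction ≤ m := by
    have h := Submodule.finrank_mono (AffineSubspace.direction_le (hQle hBW₀))
    rwa [AffineSubspace.direction_mk', hW₀] at h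
  rcases hQm.lt_or_eq with hlt | heq
  · exact Or.inl (measure_mono_null (subset_affineSpan ℝ B)
      (Q.hausdorffMeasure_eq_zero (by exact_mod_cast hlt)))
  rcases B.eq_empty_or_nonempty with rfl | ⟨b, hb⟩
  · exact Or.inl measure_empty
  have hbQ : b ∈ Q := subset_affineSpan ℝ B hb
  refine Or.inr ⟨Q, AffineSubspace.isAffinePlane ⟨b, hbQ⟩ heq, fun y hy => ?_⟩
  obtain ⟨W, hW, hBW⟩ := hBY y hy
  have hdir : Q.direction = (AffineSubspace.mk' y W).direction :=
    Submodule.eq_of_le_of_finrank_eq (AffineSubspace.direction_le (hQle hBW))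
      (by rw [AffineSubspace.direction_mk', hW, heq])
  rw [AffineSubspace.eq_of_direction_eq_of_nonempty_of_le hdir ⟨b, hbQ⟩ (hQle hBW)]
  exact AffineSubspace.self_mem_mk' y W

theorem stmt0_general {n m : ℕ}
    (E : Set (EuclideanSpace ℝ (Fin n)))
    (hE : IsRectifiableSet m n E)
    (hflat : ¬ ∃ T : Set (EuclideanSpace ℝ (Fin n)), IsAffinePlane m T ∧ μH[(m : ℝ)] (E \ T) = 0) :
    ∀ᵐ x ∂(μH[(m : ℝ)] : Measure (EuclideanSpace ℝ (Fin n))),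
      0 < μH[(m : ℝ)] (radialProj x '' (E \ {x})) := by
  obtain ⟨-, hEpos, f, hf, hcover⟩ := hE
  set Y := ⋃ i, regularPoints m E (f i)
  have hEY : μH[(m : ℝ)] (E \ Y) = 0 := by
    simpa using hausdorffMeasure_diff_iUnion_regularPoints (fun i => (hf i).1)
      (by simpa using hcover)
  have hY : Y.Nonempty :=
    nonempty_iff_ne_empty.2 fun hY => hEpos.ne' (by rwa [hY, sdiff_empty] at hEY)
  rw [ae_iff]
  simp_rw [not_lt, nonpos_iff_eq_zero]
  refine (hausdorffMeasure_eq_zero_or_subset_affinePlane hY fun y hy => ?_).resolve_right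
    fun ⟨T, hT, hYT⟩ => hflat ⟨T, hT, measure_mono_null (sdiff_subset_sdiff_right hYT) hEY⟩
  obtain ⟨i, hi⟩ := mem_iUnion.1 hy
  obtain ⟨W, hW, hBW⟩ :=
    exists_tangent_plane_of_mem_regularPoints m.cast_nonneg (hf i).1 (hf i).2 hi
  exact ⟨W, by simpa using hW, fun x hx => hBW x hx⟩

/-- If `E ⊆ ℝⁿ` is `m`-rectifiable and not essentially `m`-flat, then for `ℋᵐ`-a.e. `x ∈ ℝⁿ`
the radial projection `π_x(E \ {x})` has positive `ℋᵐ` measure. -/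
theorem stmt0 {n m : ℕ} (hm : 0 < m) (hmn : m < n)
    (E : Set (EuclideanSpace ℝ (Fin n)))
    (hE : IsRectifiableSet m n E)
    (hflat : ¬ ∃ T : Set (EuclideanSpace ℝ (Fin n)), IsAffinePlane m T ∧ μH[(m : ℝ)] (E \ T) = 0) :
    ∀ᵐ x ∂(μH[(m : ℝ)] : Measure (EuclideanSpace ℝ (Fin n))),
      0 < μH[(m : ℝ)] (radialProj x '' (E \ {x})) :=
  stmt0_general E hE hflat
end

section
/- Let n, m be positive integers with m < n. Let f : ℝᵐ → ℝⁿ be a C¹ embedding, let x₀ ∈ ℝᵐ, set z₀ = f(x₀), and assume the derivative f'(x₀) has rank m (i.e., dim f'(x₀)ℝᵐ = m). Let T = z₀ + f'(x₀)ℝᵐ be the affine tangent m-plane at z₀, and let x ∈ ℝⁿ with x ∉ T. Then there exists δ > 0 such that the radial projection π_x restricted to f(ℝᵐ) ∩ B(z₀, δ) is bilipschitz, i.e., there exist constants 0 < c ≤ C < ∞ with c|y − z| ≤ |π_x(y) − π_x(z)| ≤ C|y − z| for all y, z ∈ f(ℝᵐ) ∩ B(z₀, δ). -/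
open MeasureTheory Metric Set
open scoped ENNReal

/-!
Let `W = f'(x₀)ℝᵐ` and measure transversality to `W` by the quotient norm `‖[v]‖` on `ℝⁿ ⧸ W`,
i.e. the distance from `v` to `W`. Since `x ∉ f(x₀) + W`, the directions `y - x` for `y` near `f(x₀)` stay
uniformly transverse to `W`: `a‖y - x‖ ≤ ‖[y - x]‖`. By strict differentiability and injectivity
of `f'(x₀)`, chords `f z' - f y'` with `y', z'` near `x₀` are almost parallel to `W`:
`‖[f z' - f y']‖ ≤ (a/2)‖f z' - f y'‖`; as `f` is an embedding, every point of `f(ℝᵐ)` near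
`f(x₀)` is such an `f y'`.

Normalization is Lipschitz away from `0`, which gives the upper bound. For the lower bound,
`‖z - x‖ ‖π_x y - π_x z‖` is the distance from `z - x` to a point of the line `ℝ(y - x)`, i.e.
`‖(z - y) - t(y - x)‖`, and a vector almost parallel to `W` stays at distance
`≳ a‖z - y‖` from every multiple of a vector transverse to `W`.
-/

open Filter Topology

namespace NormedSpace

variable {V : Type*} [NormedAddCommGroup V] [NormedSpace ℝ V]

theorem norm_normalize_le (v : V) : ‖normalize v‖ ≤ 1 := by
  rw [normalize, norm_smul, norm_inv, norm_norm]
  exact inv_mul_le_one_of_le₀ le_rfl (norm_nonneg v)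

theorem norm_normalize_sub_normalize_le {u : V} (hu : u ≠ 0) (v : V) :
    ‖normalize u - normalize v‖ ≤ 2 / ‖u‖ * ‖u - v‖ := by
  have hu' : 0 < ‖u‖ := norm_pos_iff.2 hu
  have hsplit : normalize u - normalize v
      = ‖u‖⁻¹ • ((u - v) + (‖v‖ - ‖u‖) • normalize v) :=
    calc normalize u - normalize v = ‖u‖⁻¹ • u - ‖u‖⁻¹ • (‖u‖ • normalize v) := by
          rw [smul_smul, inv_mul_cancel₀ hu'.ne', one_smul]; rfl
      _ = ‖u‖⁻¹ • ((u - v) + (‖v‖ - ‖u‖) • normalize v) := by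
          rw [sub_smul, norm_smul_normalize, smul_add, smul_sub, smul_sub]; abel
  have hscale : ‖(‖v‖ - ‖u‖) • normalize v‖ ≤ ‖u - v‖ := by
    rw [norm_smul, Real.norm_eq_abs, abs_sub_comm]
    calc |‖u‖ - ‖v‖| * ‖normalize v‖ ≤ |‖u‖ - ‖v‖| * 1 := by
          gcongr; exact norm_normalize_le v
      _ ≤ ‖u - v‖ := by rw [mul_one]; exact abs_norm_sub_norm_le u v
  calc ‖normalize u - normalize v‖
      ≤ ‖u‖⁻¹ * (‖u - v‖ + ‖(‖v‖ - ‖u‖) • normalize v‖) := by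
        rw [hsplit, norm_smul, norm_inv, norm_norm]
        gcongr
        exact norm_add_le _ _
    _ ≤ 2 / ‖u‖ * ‖u - v‖ := by
        rw [div_eq_inv_mul, mul_assoc]
        gcongr
        linarith

theorem norm_mul_norm_normalize_sub_normalize (u v : V) :
    ‖v‖ * ‖normalize u - normalize v‖ = ‖v - (‖v‖ / ‖u‖) • u‖ := by
  rw [norm_sub_rev, ← norm_norm v, ← norm_smul, norm_norm, smul_sub, norm_smul_normalize,
    normalize, smul_smul, div_eq_mul_inv]

end NormedSpace

theorem radialProj_eq_normalize {n : ℕ} (x y : EuclideanSpace ℝ (Fin n)) :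
    radialProj x y = NormedSpace.normalize (y - x) :=
  rfl

theorem sub_mul_norm_le_mul_norm_sub_smul {V W : Type*} [SeminormedAddCommGroup V]
    [NormedSpace ℝ V] [SeminormedAddCommGroup W] [NormedSpace ℝ W] (Q : V →ₗ[ℝ] W)
    (hQ : ∀ v, ‖Q v‖ ≤ ‖v‖) {a ε : ℝ} (ha : 0 ≤ a) {u w : V}
    (hu : a * ‖u‖ ≤ ‖Q u‖) (hw : ‖Q w‖ ≤ ε * ‖w‖) (t : ℝ) :
    (a - ε) * ‖w‖ ≤ (1 + a) * ‖w - t • u‖ := by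
  have hline : a * ‖t • u‖ ≤ ε * ‖w‖ + ‖w - t • u‖ :=
    calc a * ‖t • u‖ = |t| * (a * ‖u‖) := by rw [norm_smul, Real.norm_eq_abs]; ring
      _ ≤ |t| * ‖Q u‖ := by gcongr
      _ = ‖Q w - Q (w - t • u)‖ := by
          rw [← map_sub, sub_sub_cancel, map_smul, norm_smul, Real.norm_eq_abs]
      _ ≤ ε * ‖w‖ + ‖w - t • u‖ := (norm_sub_le _ _).trans (add_le_add hw (hQ _))
  nlinarith [mul_le_mul_of_nonneg_left (norm_le_insert' w (t • u)) ha]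

theorem radialProj_bilipschitzOn_of_transversal {n : ℕ} {W : Type*} [SeminormedAddCommGroup W]
    [NormedSpace ℝ W] (Q : EuclideanSpace ℝ (Fin n) →ₗ[ℝ] W) (hQ : ∀ v, ‖Q v‖ ≤ ‖v‖)
    {x : EuclideanSpace ℝ (Fin n)} {S : Set (EuclideanSpace ℝ (Fin n))} {a r R : ℝ}
    (ha : 0 < a) (hr : 0 < r) (hrR : r ≤ R)
    (hdist : ∀ y ∈ S, ‖y - x‖ ∈ Icc r R)
    (hcone : ∀ y ∈ S, a * ‖y - x‖ ≤ ‖Q (y - x)‖)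
    (hchord : ∀ y ∈ S, ∀ z ∈ S, ‖Q (z - y)‖ ≤ a / 2 * ‖z - y‖) :
    ∃ c C : ℝ, 0 < c ∧ c ≤ C ∧ ∀ y ∈ S, ∀ z ∈ S,
      c * ‖y - z‖ ≤ ‖radialProj x y - radialProj x z‖ ∧
      ‖radialProj x y - radialProj x z‖ ≤ C * ‖y - z‖ := by
  have hR : 0 < R := hr.trans_le hrR
  simp only [radialProj_eq_normalize]
  refine ⟨a / (2 * (1 + a) * R), 2 / r, by positivity, ?_, fun y hy z hz => ⟨?_, ?_⟩⟩
  · rw [div_le_div_iff₀ (by positivity) hr]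
    nlinarith
  · set t := ‖z - x‖ / ‖y - x‖
    have hsplit : (z - y) - (t - 1) • (y - x) = (z - x) - t • (y - x) := by
      rw [sub_smul, one_smul]; abel
    have hlower := sub_mul_norm_le_mul_norm_sub_smul Q hQ ha.le (hcone y hy)
      (hchord y hy z hz) (t - 1)
    rw [sub_half, hsplit, ← NormedSpace.norm_mul_norm_normalize_sub_normalize] at hlower
    have hzx := mul_le_mul_of_nonneg_right (hdist z hz).2
      (norm_nonneg (NormedSpace.normalize (y - x) - NormedSpace.normalize (z - x)))
    rw [div_mul_eq_mul_div, div_le_iff₀ (by positivity), norm_sub_rev]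
    nlinarith
  · have hyx : y - x ≠ 0 := norm_pos_iff.1 (hr.trans_le (hdist y hy).1)
    calc _ ≤ 2 / ‖y - x‖ * ‖(y - x) - (z - x)‖ :=
          NormedSpace.norm_normalize_sub_normalize_le hyx (z - x)
      _ ≤ 2 / r * ‖y - z‖ := by
          rw [sub_sub_sub_cancel_right]
          gcongr
          exact (hdist y hy).1

theorem LinearMap.ker_eq_bot_of_finrank_range_eq {K V V₂ : Type*} [DivisionRing K]
    [AddCommGroup V] [Module K V] [AddCommGroup V₂] [Module K V₂] [FiniteDimensional K V]
    (f : V →ₗ[K] V₂) (h : Module.finrank K (LinearMap.range f) = Module.finrank K V) :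
    LinearMap.ker f = ⊥ := by
  have := LinearMap.finrank_range_add_finrank_ker f
  exact Submodule.finrank_eq_zero.1 (by omega)

section Transversality

variable {E F : Type*} [NormedAddCommGroup E] [NormedSpace ℝ E] [NormedAddCommGroup F]
  [NormedSpace ℝ F]

theorem exists_pos_eventually_mul_norm_le_norm_mkQ {W : Submodule ℝ F}
    (hW : IsClosed (W : Set F)) {p x : F} (hx : p - x ∉ W) :
    ∃ a > 0, ∀ᶠ y in 𝓝 p, a * ‖y - x‖ ≤ ‖W.mkQ (y - x)‖ := by
  have hq : 0 < ‖W.mkQ (p - x)‖ := by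
    refine (norm_nonneg _).lt_of_ne' fun h => hx ?_
    simpa [hW.closure_eq] using QuotientAddGroup.norm_mk_eq_zero_iff_mem_closure.1 h
  have hd : 0 < ‖p - x‖ := norm_pos_iff.2 fun h => hx (h ▸ W.zero_mem)
  refine ⟨‖W.mkQ (p - x)‖ / (2 * ‖p - x‖), by positivity, ?_⟩
  have hcont : Continuous fun y => ‖W.mkQ (y - x)‖ :=
    (W.mkQL.continuous.comp (continuous_id.sub continuous_const)).norm
  refine (ContinuousAt.eventually_lt (by fun_prop) hcont.continuousAt ?_).mono fun _ => le_of_lt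
  rw [div_mul_eq_mul_div, mul_div_mul_right _ _ hd.ne']
  linarith

theorem HasStrictFDerivAt.exists_nhds_norm_mkQ_sub_le {f : E → F} {D : E →L[ℝ] F} {x₀ : E}
    (hf : HasStrictFDerivAt f D x₀) {b : ℝ} (hb : 0 < b) (hD : ∀ h, b * ‖h‖ ≤ ‖D h‖)
    {ε : ℝ} (hε : 0 < ε) :
    ∃ s ∈ 𝓝 x₀, ∀ y ∈ s, ∀ z ∈ s,
      ‖(LinearMap.range (D : E →ₗ[ℝ] F)).mkQ (f z - f y)‖ ≤ ε * ‖f z - f y‖ := by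
  set η := ε * b / (1 + ε) with hη_def
  have hη : 0 < η := by positivity
  have hεη : ε * (b - η) = η := by rw [hη_def]; field_simp; ring
  obtain ⟨s, hs, happrox⟩ := hf.approximates_deriv_on_nhds (c := ⟨η, hη.le⟩) (Or.inr hη)
  refine ⟨s, hs, fun y hy z hz => ?_⟩
  have herr : ‖f z - f y - D (z - y)‖ ≤ η * ‖z - y‖ := happrox z hz y hy
  have hquot : ‖(LinearMap.range (D : E →ₗ[ℝ] F)).mkQ (f z - f y)‖ ≤ η * ‖z - y‖ := by
    have hD0 : (LinearMap.range (D : E →ₗ[ℝ] F)).mkQ (D (z - y)) = 0 :=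
      (Submodule.Quotient.mk_eq_zero _).2 (LinearMap.mem_range_self (D : E →ₗ[ℝ] F) _)
    rw [← sub_add_cancel (f z - f y) (D (z - y)), map_add, hD0, add_zero]
    exact (Submodule.Quotient.norm_mk_le _ _).trans herr
  have hchord_ge : (b - η) * ‖z - y‖ ≤ ‖f z - f y‖ := by
    have htri : ‖D (z - y)‖ ≤ ‖f z - f y‖ + ‖f z - f y - D (z - y)‖ := by
      simpa using norm_sub_le (f z - f y) (f z - f y - D (z - y))
    linarith [hD (z - y)]
  calc _ ≤ η * ‖z - y‖ := hquot
    _ = ε * ((b - η) * ‖z - y‖) := by rw [← mul_assoc, hεη]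
    _ ≤ ε * ‖f z - f y‖ := by gcongr

end Transversality

theorem stmt2_general {n m : ℕ}
    (f : EuclideanSpace ℝ (Fin m) → EuclideanSpace ℝ (Fin n)) (hf : IsC1Embedding f)
    (x₀ : EuclideanSpace ℝ (Fin m))
    (hrank : Module.finrank ℝ (LinearMap.range (fderiv ℝ f x₀ : EuclideanSpace ℝ (Fin m) →ₗ[ℝ] EuclideanSpace ℝ (Fin n))) = m)
    (x : EuclideanSpace ℝ (Fin n))
    (hx : x ∉ (fun w => f x₀ + w) ''
      ((LinearMap.range (fderiv ℝ f x₀ : EuclideanSpace ℝ (Fin m) →ₗ[ℝ] EuclideanSpace ℝ (Fin n)) : Submodule ℝ (EuclideanSpace ℝ (Fin n))) :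
        Set (EuclideanSpace ℝ (Fin n)))) :
    ∃ δ > 0, ∃ c C : ℝ, 0 < c ∧ c ≤ C ∧
      ∀ y ∈ Set.range f ∩ ball (f x₀) δ, ∀ z ∈ Set.range f ∩ ball (f x₀) δ,
        c * ‖y - z‖ ≤ ‖radialProj x y - radialProj x z‖ ∧
        ‖radialProj x y - radialProj x z‖ ≤ C * ‖y - z‖ := by
  set D := fderiv ℝ f x₀
  set W := LinearMap.range (D : EuclideanSpace ℝ (Fin m) →ₗ[ℝ] EuclideanSpace ℝ (Fin n))
  obtain ⟨K, hK, hKD⟩ := LinearMap.exists_antilipschitzWith _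
    (LinearMap.ker_eq_bot_of_finrank_range_eq
      (D : EuclideanSpace ℝ (Fin m) →ₗ[ℝ] EuclideanSpace ℝ (Fin n))
      (by rw [hrank, finrank_euclideanSpace_fin]))
  have hxW : f x₀ - x ∉ W := fun h => hx ⟨x - f x₀, by simpa using W.neg_mem h, add_sub_cancel _ _⟩
  have hd : 0 < ‖f x₀ - x‖ := norm_pos_iff.2 fun h => hxW (h ▸ W.zero_mem)
  obtain ⟨a, ha, hcone⟩ :=
    exists_pos_eventually_mul_norm_le_norm_mkQ W.closed_of_finiteDimensional hxW
  obtain ⟨s, hs, hchord⟩ :=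
    (hf.1.contDiffAt.hasStrictFDerivAt one_ne_zero).exists_nhds_norm_mkQ_sub_le
      (inv_pos.2 (NNReal.coe_pos.2 hK))
      (fun h => (inv_mul_le_iff₀ (NNReal.coe_pos.2 hK)).2 (D.bound_of_antilipschitz hKD h))
      (half_pos ha)
  obtain ⟨t, ht, hts⟩ := (hf.2.isInducing.nhds_eq_comap x₀ ▸ hs : s ∈ comap f (𝓝 (f x₀)))
  have hdist : ∀ᶠ y in 𝓝 (f x₀), ‖y - x‖ ∈ Icc (‖f x₀ - x‖ / 2) (2 * ‖f x₀ - x‖) :=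
    (continuous_id.sub continuous_const).norm.continuousAt.eventually_mem
      (Icc_mem_nhds (x := ‖f x₀ - x‖) (by linarith) (by linarith))
  obtain ⟨δ, hδ, hball⟩ :=
    Metric.eventually_nhds_iff_ball.1 ((eventually_mem_set.2 ht).and (hcone.and hdist))
  refine ⟨δ, hδ, radialProj_bilipschitzOn_of_transversal W.mkQ (Submodule.Quotient.norm_mk_le W)
    (R := 2 * ‖f x₀ - x‖) ha (half_pos hd) (by linarith) ?_ ?_ ?_⟩
  · exact fun y hy => (hball y hy.2).2.2
  · exact fun y hy => (hball y hy.2).2.1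
  · rintro _ ⟨⟨y, rfl⟩, hy⟩ _ ⟨⟨z, rfl⟩, hz⟩
    exact hchord y (hts (hball _ hy).1) z (hts (hball _ hz).1)

/-- If `f : ℝᵐ → ℝⁿ` is a `C¹` embedding whose derivative at `x₀` has rank `m`, and
`x` lies outside the affine tangent plane `T = f(x₀) + f'(x₀)ℝᵐ`, then the radial projection
`π_x` is bilipschitz on `f(ℝᵐ) ∩ B(f(x₀), δ)` for some `δ > 0`. -/
theorem stmt2 {n m : ℕ} (hm : 0 < m) (hmn : m < n)
    (f : EuclideanSpace ℝ (Fin m) → EuclideanSpace ℝ (Fin n)) (hf : IsC1Embedding f)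
    (x₀ : EuclideanSpace ℝ (Fin m))
    (hrank : Module.finrank ℝ (LinearMap.range (fderiv ℝ f x₀ : EuclideanSpace ℝ (Fin m) →ₗ[ℝ] EuclideanSpace ℝ (Fin n))) = m)
    (x : EuclideanSpace ℝ (Fin n))
    (hx : x ∉ (fun w => f x₀ + w) ''
      ((LinearMap.range (fderiv ℝ f x₀ : EuclideanSpace ℝ (Fin m) →ₗ[ℝ] EuclideanSpace ℝ (Fin n)) : Submodule ℝ (EuclideanSpace ℝ (Fin n))) :
        Set (EuclideanSpace ℝ (Fin n)))) :
    ∃ δ > 0, ∃ c C : ℝ, 0 < c ∧ c ≤ C ∧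
      ∀ y ∈ Set.range f ∩ ball (f x₀) δ, ∀ z ∈ Set.range f ∩ ball (f x₀) δ,
        c * ‖y - z‖ ≤ ‖radialProj x y - radialProj x z‖ ∧
        ‖radialProj x y - radialProj x z‖ ≤ C * ‖y - z‖ :=
  stmt2_general f hf x₀ hrank x hx
end

section
/- Let n, m be positive integers with m < n. Let E ⊆ ℝⁿ be ℋᵐ-measurable, let f : ℝᵐ → ℝⁿ be a C¹ embedding, let x₀ ∈ ℝᵐ, set z₀ = f(x₀), and assume: f'(x₀) has rank m, z₀ is an ℋᵐ-density point of E ∩ f(ℝᵐ) (i.e., lim_{r→0} ℋᵐ(E ∩ f(ℝᵐ) ∩ B(z₀,r))/ℋᵐ(f(ℝᵐ) ∩ B(z₀,r)) = 1), and ℋᵐ(E ∩ f(ℝᵐ) ∩ B(z₀, r)) > 0 for all r > 0. Let T = z₀ + f'(x₀)ℝᵐ. Then for every x ∈ ℝⁿ with x ∉ T, the radial projection π_x(E \ {x}) has positive ℋᵐ measure. -/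
open MeasureTheory Metric Set
open scoped ENNReal

/-!
Since `f x₀ ≠ x`, the map `radialProj x ∘ f` is strictly differentiable at `x₀` with derivative
`Dπ ∘ f'(x₀)`, where `Dπ` is the derivative of `radialProj x` at `f x₀`. This derivative is
injective: `f'(x₀)` has rank `m`, and the kernel of `Dπ` is the line through `f x₀ - x`, which
meets the tangent space only at `0` because `x ∉ T`. Hence `radialProj x ∘ f` is antilipschitz
near `x₀`; as `f` is Lipschitz near `x₀` and an embedding, `radialProj x` is antilipschitz on
`range f ∩ B(f x₀, δ)` for small `δ`. Antilipschitz maps shrink `ℋᵐ` by at most a constant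
factor, so `ℋᵐ(E ∩ range f ∩ B(f x₀, δ)) > 0` forces `ℋᵐ(π_x(E \ {x})) > 0`.
-/

open Function Filter Topology Module
open scoped NNReal

theorem LinearMap.injective_of_finrank_range_eq {K V W : Type*} [DivisionRing K] [AddCommGroup V]
    [Module K V] [FiniteDimensional K V] [AddCommGroup W] [Module K W] {f : V →ₗ[K] W}
    (hf : finrank K (LinearMap.range f) = finrank K V) : Injective f := by
  have hrank_nullity := f.finrank_range_add_finrank_ker
  rw [← LinearMap.ker_eq_bot, ← Submodule.finrank_eq_zero]
  omega

theorem HasStrictFDerivAt.exists_antilipschitzWith_domRestrict_s9 {𝕜 E F : Type*}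
    [NontriviallyNormedField 𝕜] [CompleteSpace 𝕜] [NormedAddCommGroup E] [NormedSpace 𝕜 E]
    [FiniteDimensional 𝕜 E] [NormedAddCommGroup F] [NormedSpace 𝕜 F]
    {f : E → F} {f' : E →L[𝕜] F} {a : E} (hf : HasStrictFDerivAt f f' a)
    (hf' : Injective f') :
    ∃ K, ∃ s ∈ 𝓝 a, AntilipschitzWith K (s.domRestrict f) := by
  obtain ⟨K, hK, hanti⟩ := (f' : E →ₗ[𝕜] F).exists_antilipschitzWith (LinearMap.ker_eq_bot.2 hf')
  obtain ⟨s, hs, happrox⟩ := hf.approximates_deriv_on_nhds (c := K⁻¹ / 2)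
    (Or.inr (by positivity))
  have hanti' := (hanti.domRestrict s).add_lipschitzWith happrox.lipschitz_sub
    (NNReal.half_lt_self (inv_ne_zero hK.ne'))
  simp only [Set.domRestrict_apply, ContinuousLinearMap.coe_coe, add_sub_cancel] at hanti'
  exact ⟨_, s, hs, hanti'⟩

theorem LipschitzOnWith.antilipschitzWith_domRestrict_image {X Y Z : Type*}
    [PseudoEMetricSpace X] [PseudoEMetricSpace Y] [PseudoEMetricSpace Z]
    {f : X → Y} {g : Y → Z} {s : Set X} {L K : ℝ≥0} (hf : LipschitzOnWith L f s)
    (hgf : AntilipschitzWith K (s.domRestrict (g ∘ f))) :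
    AntilipschitzWith (L * K) ((f '' s).domRestrict g) := by
  rintro ⟨_, a, ha, rfl⟩ ⟨_, b, hb, rfl⟩
  calc edist (f a) (f b) ≤ L * edist a b := hf ha hb
    _ ≤ L * (K * edist (g (f a)) (g (f b))) := by gcongr; exact hgf ⟨a, ha⟩ ⟨b, hb⟩
    _ = ↑(L * K) * edist (g (f a)) (g (f b)) := by rw [ENNReal.coe_mul, mul_assoc]

theorem AntilipschitzWith.hausdorffMeasure_le_of_subset {X Y : Type*}
    [EMetricSpace X] [MeasurableSpace X] [BorelSpace X]
    [EMetricSpace Y] [MeasurableSpace Y] [BorelSpace Y]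
    {g : X → Y} {s t : Set X} {K : ℝ≥0} {d : ℝ} (hg : AntilipschitzWith K (s.domRestrict g))
    (hd : 0 ≤ d) (hts : t ⊆ s) :
    μH[d] t ≤ (K : ℝ≥0∞) ^ d * μH[d] (g '' t) := by
  have ht : t = Subtype.val '' (Subtype.val ⁻¹' t : Set s) := by
    rw [Subtype.image_preimage_coe, inter_eq_right.2 hts]
  calc μH[d] t = μH[d] (Subtype.val ⁻¹' t : Set s) := by
        conv_lhs => rw [ht]
        rw [isometry_subtype_coe.hausdorffMeasure_image (Or.inl hd)]
    _ ≤ (K : ℝ≥0∞) ^ d * μH[d] (s.domRestrict g '' (Subtype.val ⁻¹' t)) :=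
        hg.le_hausdorffMeasure_image hd _
    _ = (K : ℝ≥0∞) ^ d * μH[d] (g '' t) := by
        rw [Set.domRestrict_eq, image_comp, ← ht]

section RadialProjection

variable {n : ℕ} {x y : EuclideanSpace ℝ (Fin n)}

theorem contDiffAt_radialProj_s9 {k : WithTop ℕ∞} (hy : y ≠ x) : ContDiffAt ℝ k (radialProj x) y :=
  have hsub : ContDiffAt ℝ k (fun z => z - x) y := contDiffAt_id.sub contDiffAt_const
  ((hsub.norm ℝ (sub_ne_zero.2 hy)).inv (norm_ne_zero_iff.2 (sub_ne_zero.2 hy))).smul hsub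

theorem norm_smul_radialProj (x y : EuclideanSpace ℝ (Fin n)) :
    ‖y - x‖ • radialProj x y = y - x := by
  rcases eq_or_ne y x with rfl | hy
  · simp [radialProj]
  · rw [radialProj, smul_smul, mul_inv_cancel₀ (norm_ne_zero_iff.2 (sub_ne_zero.2 hy)), one_smul]

/-- Differentiate the identity `‖z - x‖ • radialProj x z = z - x` at `y`. -/
theorem mem_span_of_fderiv_radialProj_eq_zero (hy : y ≠ x) {h : EuclideanSpace ℝ (Fin n)}
    (hh : fderiv ℝ (radialProj x) y h = 0) : h ∈ ℝ ∙ (y - x) := by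
  have hnorm : HasFDerivAt (fun z => ‖z - x‖) (fderiv ℝ (fun z => ‖z - x‖) y) y :=
    ((differentiableAt_id.sub_const x).norm ℝ (sub_ne_zero.2 hy)).hasFDerivAt
  have hprod := hnorm.smul
    ((contDiffAt_radialProj_s9 (k := 1) hy).differentiableAt one_ne_zero).hasFDerivAt
  rw [show (fun z => ‖z - x‖) • radialProj x = fun z => z - x from
    funext (norm_smul_radialProj x)] at hprod
  have hid := (hasFDerivAt_id (𝕜 := ℝ) y).sub_const x
  have := congrArg (· h) (hprod.unique hid)
  simp only [add_apply, smul_apply, ContinuousLinearMap.smulRight_apply, hh, smul_zero, zero_add,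
    ContinuousLinearMap.id_apply] at this
  rw [← this, radialProj, smul_smul]
  exact Submodule.smul_mem _ _ (Submodule.mem_span_singleton_self _)

theorem injective_fderiv_radialProj_comp_s9 {V : Type*} [NormedAddCommGroup V] [NormedSpace ℝ V]
    {D : V →L[ℝ] EuclideanSpace ℝ (Fin n)} (hD : Injective D) (hy : y ≠ x)
    (hx : x ∉ (fun w => y + w) '' (LinearMap.range (D : V →ₗ[ℝ] EuclideanSpace ℝ (Fin n)) :
      Set (EuclideanSpace ℝ (Fin n)))) :
    Injective ((fderiv ℝ (radialProj x) y).comp D) := by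
  refine (injective_iff_map_eq_zero _).2 fun a ha => ?_
  obtain ⟨t, ht⟩ := Submodule.mem_span_singleton.1 (mem_span_of_fderiv_radialProj_eq_zero hy ha)
  replace ht : D a = t • (y - x) := ht.symm
  rcases eq_or_ne t 0 with rfl | ht₀
  · exact (injective_iff_map_eq_zero D).1 hD a (by rw [ht, zero_smul])
  · refine absurd ⟨D (-t⁻¹ • a), LinearMap.mem_range_self _ _, ?_⟩ hx
    rw [map_smul, ht, neg_smul, smul_smul, inv_mul_cancel₀ ht₀, one_smul, neg_sub]
    exact add_sub_cancel y x

end RadialProjection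

theorem stmt9_general {n m : ℕ}
    (E : Set (EuclideanSpace ℝ (Fin n)))
    (f : EuclideanSpace ℝ (Fin m) → EuclideanSpace ℝ (Fin n)) (hf : IsC1Embedding f)
    (x₀ : EuclideanSpace ℝ (Fin m))
    (hrank : Module.finrank ℝ (LinearMap.range (fderiv ℝ f x₀ : EuclideanSpace ℝ (Fin m) →ₗ[ℝ] EuclideanSpace ℝ (Fin n))) = m)
    (hpos : ∀ r > (0 : ℝ), 0 < μH[(m : ℝ)] (E ∩ Set.range f ∩ ball (f x₀) r)) :
    ∀ x : EuclideanSpace ℝ (Fin n),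
      x ∉ (fun w => f x₀ + w) ''
        ((LinearMap.range (fderiv ℝ f x₀ : EuclideanSpace ℝ (Fin m) →ₗ[ℝ] EuclideanSpace ℝ (Fin n)) : Submodule ℝ (EuclideanSpace ℝ (Fin n))) :
          Set (EuclideanSpace ℝ (Fin n))) →
      0 < μH[(m : ℝ)] (radialProj x '' (E \ {x})) := by
  intro x hx
  have hx₀ : f x₀ ≠ x := fun h => hx ⟨0, zero_mem _, by simp [h]⟩
  have hD : Injective (fderiv ℝ f x₀) :=
    LinearMap.injective_of_finrank_range_eq (hrank.trans (finrank_euclideanSpace_fin).symm)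
  have hf₀ : HasStrictFDerivAt f (fderiv ℝ f x₀) x₀ :=
    hf.1.contDiffAt.hasStrictFDerivAt one_ne_zero
  have hπf : HasStrictFDerivAt (radialProj x ∘ f)
      ((fderiv ℝ (radialProj x) (f x₀)).comp (fderiv ℝ f x₀)) x₀ :=
    ((contDiffAt_radialProj_s9 hx₀).hasStrictFDerivAt one_ne_zero).comp x₀ hf₀
  obtain ⟨K, V, hV, hK⟩ :=
    hπf.exists_antilipschitzWith_domRestrict_s9 (injective_fderiv_radialProj_comp_s9 hD hx₀ hx)
  obtain ⟨L, V', hV', hL⟩ := hf₀.exists_lipschitzOnWith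
  have hanti : AntilipschitzWith (L * K) ((f '' (V ∩ V')).domRestrict (radialProj x)) :=
    (hL.mono inter_subset_right).antilipschitzWith_domRestrict_image
      fun a b => hK ⟨a, a.2.1⟩ ⟨b, b.2.1⟩
  obtain ⟨δ, hδ, hδV⟩ := Metric.mem_nhdsWithin_iff.1
    (hf.2.isInducing.image_mem_nhdsWithin (inter_mem hV hV'))
  set A := E ∩ range f ∩ ball (f x₀) (min δ (dist x (f x₀)))
  have hAV : A ⊆ f '' (V ∩ V') := fun y hy =>
    hδV ⟨ball_subset_ball (min_le_left _ _) hy.2, hy.1.2⟩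
  have hAE : A ⊆ E \ {x} := fun y hy =>
    ⟨hy.1.1, fun hyx => (mem_ball.1 hy.2).not_ge (hyx ▸ min_le_right _ _)⟩
  have hle := hanti.hausdorffMeasure_le_of_subset (d := m) (Nat.cast_nonneg _) hAV
  have hApos : 0 < μH[(m : ℝ)] A := hpos _ (lt_min hδ (dist_pos.2 hx₀.symm))
  refine (pos_iff_ne_zero.2 fun h0 => ?_).trans_le (measure_mono (image_mono hAE))
  rw [h0, mul_zero] at hle
  exact hApos.ne' (le_zero_iff.1 hle)

/-- If `z₀ = f(x₀)` is an `ℋᵐ`-density point of `E ∩ f(ℝᵐ)` at which `f'` has rank `m`, and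
`E ∩ f(ℝᵐ)` has positive measure in every ball around `z₀`, then for every `x` outside the
affine tangent plane `T = z₀ + f'(x₀)ℝᵐ` the projection `π_x(E \ {x})` has positive `ℋᵐ`
measure. -/
theorem stmt9 {n m : ℕ} (hm : 0 < m) (hmn : m < n)
    (E : Set (EuclideanSpace ℝ (Fin n)))
    (hE : NullMeasurableSet E (μH[(m : ℝ)] : Measure (EuclideanSpace ℝ (Fin n))))
    (f : EuclideanSpace ℝ (Fin m) → EuclideanSpace ℝ (Fin n)) (hf : IsC1Embedding f)
    (x₀ : EuclideanSpace ℝ (Fin m))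
    (hrank : Module.finrank ℝ (LinearMap.range (fderiv ℝ f x₀ : EuclideanSpace ℝ (Fin m) →ₗ[ℝ] EuclideanSpace ℝ (Fin n))) = m)
    (hdensity : Filter.Tendsto
      (fun r : ℝ => μH[(m : ℝ)] (E ∩ Set.range f ∩ ball (f x₀) r) /
        μH[(m : ℝ)] (Set.range f ∩ ball (f x₀) r))
      (nhdsWithin 0 (Set.Ioi 0)) (nhds 1))
    (hpos : ∀ r > (0 : ℝ), 0 < μH[(m : ℝ)] (E ∩ Set.range f ∩ ball (f x₀) r)) :
    ∀ x : EuclideanSpace ℝ (Fin n),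
      x ∉ (fun w => f x₀ + w) ''
        ((LinearMap.range (fderiv ℝ f x₀ : EuclideanSpace ℝ (Fin m) →ₗ[ℝ] EuclideanSpace ℝ (Fin n)) : Submodule ℝ (EuclideanSpace ℝ (Fin n))) :
          Set (EuclideanSpace ℝ (Fin n))) →
      0 < μH[(m : ℝ)] (radialProj x '' (E \ {x})) :=
  stmt9_general E f hf x₀ hrank hpos
end
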